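/- arXiv:1603.07606 — 2 statements merged into one kernel-verified Lean document; each statement's English description precedes it below -/
import Mathlib

section
/- (Completeness) If A is a global semantic consequence of Γ over neighborhood models satisfying (c), (h), (t), (n), then A is derivable from Γ in LP(□). -/
/-- Modal formulas with a box operator. -/
inductive Form : Type
  | atom : ℕ → Form
  | bot : Form
  | imp : Form → Form → Form
  | and : Form → Form → Form
  | or : Form → Form → Form
  | box : Form → Form

namespace Form
def neg (A : Form) : Form := A.imp Form.bot
def top : Form := Form.neg Form.bot
def iff (A B : Form) : Form := (A.imp B).and (B.imp A)
end Form

/-- A neighborhood model `(W, S, V)`. -/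
structure Model (W : Type*) where
  S : W → Set (Set W)
  V : ℕ → Set W

/-- Truth at a world: classical on Boolean connectives and
`α ⊨ □A` iff the truth set of `A` belongs to `S α`. -/
def truth {W : Type*} (M : Model W) : W → Form → Prop
  | w, .atom n => w ∈ M.V n
  | _, .bot => False
  | w, .imp A B => truth M w A → truth M w B
  | w, .and A B => truth M w A ∧ truth M w B
  | w, .or A B => truth M w A ∨ truth M w B
  | w, .box A => {v | truth M v A} ∈ M.S w

/-- The truth set `‖A‖` of a formula in a model. -/
def truthSet {W : Type*} (M : Model W) (A : Form) : Set W := {w | truth M w A}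

/-- Condition (c): `S(α)` is closed under binary intersections. -/
def condC {W : Type*} (M : Model W) : Prop :=
  ∀ (α : W) (X Y : Set W), X ∈ M.S α → Y ∈ M.S α → X ∩ Y ∈ M.S α

/-- Condition (h): if `X ∈ S(α)` or `Y ∈ S(α)` then `X ∪ Y ∈ S(α)`. -/
def condH {W : Type*} (M : Model W) : Prop :=
  ∀ (α : W) (X Y : Set W), (X ∈ M.S α ∨ Y ∈ M.S α) → X ∪ Y ∈ M.S α

/-- Condition (t): if `X ∈ S(α)` then `α ∈ X`. -/
def condT {W : Type*} (M : Model W) : Prop :=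
  ∀ (α : W) (X : Set W), X ∈ M.S α → α ∈ X

/-- Condition (n): `W ∈ S(α)`. -/
def condN {W : Type*} (M : Model W) : Prop :=
  ∀ α : W, (Set.univ : Set W) ∈ M.S α

/-- Derivability from a set of premises in the modal logic `LP(□)`:
classical propositional logic plus the axioms C, H, T, N and rules MP, RE. -/
inductive Deriv (Γ : Set Form) : Form → Prop
  | prem {A : Form} : A ∈ Γ → Deriv Γ A
  | axK (A B : Form) : Deriv Γ (A.imp (B.imp A))
  | axS (A B C : Form) : Deriv Γ ((A.imp (B.imp C)).imp ((A.imp B).imp (A.imp C)))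
  | axDNE (A : Form) : Deriv Γ ((A.neg.neg).imp A)
  | axAndI (A B : Form) : Deriv Γ (A.imp (B.imp (A.and B)))
  | axAndL (A B : Form) : Deriv Γ ((A.and B).imp A)
  | axAndR (A B : Form) : Deriv Γ ((A.and B).imp B)
  | axOrL (A B : Form) : Deriv Γ (A.imp (A.or B))
  | axOrR (A B : Form) : Deriv Γ (B.imp (A.or B))
  | axOrE (A B C : Form) : Deriv Γ ((A.imp C).imp ((B.imp C).imp ((A.or B).imp C)))
  | axC (A B : Form) : Deriv Γ (((A.box).and (B.box)).imp ((A.and B).box))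
  | axH (A B : Form) : Deriv Γ (((A.box).or (B.box)).imp ((A.or B).box))
  | axT (A : Form) : Deriv Γ ((A.box).imp A)
  | axN : Deriv Γ (Form.top.box)
  | mp {A B : Form} : Deriv Γ (A.imp B) → Deriv Γ A → Deriv Γ B
  | re {A B : Form} : Deriv Γ (A.iff B) → Deriv Γ ((A.box).iff (B.box))

/-- Global semantic consequence over neighborhood models satisfying
conditions (c), (h), (t), (n). -/
def GlobalCons (Γ : Set Form) (A : Form) : Prop :=
  ∀ (W : Type) (M : Model W), condC M → condH M → condT M → condN M →
    (∀ B ∈ Γ, ∀ α : W, truth M α B) → ∀ α : W, truth M α A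

namespace Compl

noncomputable instance : DecidableEq Form := Classical.decEq _

/-- Local (propositional + modal-axiom) derivability: no RE rule. -/
inductive L (Δ : Set Form) : Form → Prop
  | prem {A : Form} : A ∈ Δ → L Δ A
  | axK (A B : Form) : L Δ (A.imp (B.imp A))
  | axS (A B C : Form) : L Δ ((A.imp (B.imp C)).imp ((A.imp B).imp (A.imp C)))
  | axDNE (A : Form) : L Δ ((A.neg.neg).imp A)
  | axAndI (A B : Form) : L Δ (A.imp (B.imp (A.and B)))
  | axAndL (A B : Form) : L Δ ((A.and B).imp A)
  | axAndR (A B : Form) : L Δ ((A.and B).imp B)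
  | axOrL (A B : Form) : L Δ (A.imp (A.or B))
  | axOrR (A B : Form) : L Δ (B.imp (A.or B))
  | axOrE (A B C : Form) : L Δ ((A.imp C).imp ((B.imp C).imp ((A.or B).imp C)))
  | axC (A B : Form) : L Δ (((A.box).and (B.box)).imp ((A.and B).box))
  | axH (A B : Form) : L Δ (((A.box).or (B.box)).imp ((A.or B).box))
  | axT (A : Form) : L Δ ((A.box).imp A)
  | axN : L Δ (Form.top.box)
  | mp {A B : Form} : L Δ (A.imp B) → L Δ A → L Δ B

theorem L.mono {Δ Δ' : Set Form} (h : Δ ⊆ Δ') {A : Form} (d : L Δ A) : L Δ' A := by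
  induction d with
  | prem hA => exact L.prem (h hA)
  | axK A B => exact L.axK A B
  | axS A B C => exact L.axS A B C
  | axDNE A => exact L.axDNE A
  | axAndI A B => exact L.axAndI A B
  | axAndL A B => exact L.axAndL A B
  | axAndR A B => exact L.axAndR A B
  | axOrL A B => exact L.axOrL A B
  | axOrR A B => exact L.axOrR A B
  | axOrE A B C => exact L.axOrE A B C
  | axC A B => exact L.axC A B
  | axH A B => exact L.axH A B
  | axT A => exact L.axT A
  | axN => exact L.axN
  | mp _ _ ih1 ih2 => exact L.mp ih1 ih2

theorem L.toDeriv {Γ : Set Form} {A : Form} (d : L {B | Deriv Γ B} A) : Deriv Γ A := by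
  induction d with
  | prem hA => exact hA
  | axK A B => exact Deriv.axK A B
  | axS A B C => exact Deriv.axS A B C
  | axDNE A => exact Deriv.axDNE A
  | axAndI A B => exact Deriv.axAndI A B
  | axAndL A B => exact Deriv.axAndL A B
  | axAndR A B => exact Deriv.axAndR A B
  | axOrL A B => exact Deriv.axOrL A B
  | axOrR A B => exact Deriv.axOrR A B
  | axOrE A B C => exact Deriv.axOrE A B C
  | axC A B => exact Deriv.axC A B
  | axH A B => exact Deriv.axH A B
  | axT A => exact Deriv.axT A
  | axN => exact Deriv.axN
  | mp _ _ ih1 ih2 => exact Deriv.mp ih1 ih2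

theorem L.impSelf (Δ : Set Form) (A : Form) : L Δ (A.imp A) :=
  L.mp (L.mp (L.axS A (A.imp A) A) (L.axK A (A.imp A))) (L.axK A A)

/-- Deduction theorem for local derivability. -/
theorem L.ded {Δ : Set Form} {A B : Form} (d : L (insert A Δ) B) : L Δ (A.imp B) := by
  induction d with
  | @prem C hC =>
    rcases hC with h | h
    · exact h ▸ L.impSelf Δ A
    · exact L.mp (L.axK C A) (L.prem h)
  | axK B C => exact L.mp (L.axK _ A) (L.axK B C)
  | axS B C D => exact L.mp (L.axK _ A) (L.axS B C D)
  | axDNE B => exact L.mp (L.axK _ A) (L.axDNE B)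
  | axAndI B C => exact L.mp (L.axK _ A) (L.axAndI B C)
  | axAndL B C => exact L.mp (L.axK _ A) (L.axAndL B C)
  | axAndR B C => exact L.mp (L.axK _ A) (L.axAndR B C)
  | axOrL B C => exact L.mp (L.axK _ A) (L.axOrL B C)
  | axOrR B C => exact L.mp (L.axK _ A) (L.axOrR B C)
  | axOrE B C D => exact L.mp (L.axK _ A) (L.axOrE B C D)
  | axC B C => exact L.mp (L.axK _ A) (L.axC B C)
  | axH B C => exact L.mp (L.axK _ A) (L.axH B C)
  | axT B => exact L.mp (L.axK _ A) (L.axT B)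
  | axN => exact L.mp (L.axK _ A) L.axN
  | mp _ _ ih1 ih2 => exact L.mp (L.mp (L.axS A _ _) ih1) ih2

def Con (Δ : Set Form) : Prop := ¬ L Δ Form.bot

theorem L.botImp (Δ : Set Form) (A : Form) : L Δ (Form.bot.imp A) := by
  apply L.ded
  exact L.mp (L.axDNE A) (L.mp (L.axK Form.bot (A.neg)) (L.prem (Or.inl rfl)))

theorem L.negImp (Δ : Set Form) (A B : Form) : L Δ ((A.neg).imp (A.imp B)) := by
  apply L.ded; apply L.ded
  exact L.mp (L.botImp _ B)
    (L.mp (L.prem (Or.inr (Or.inl rfl))) (L.prem (Or.inl rfl)))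

/-- Finite support. -/
theorem L.fin {Δ : Set Form} {A : Form} (d : L Δ A) :
    ∃ s : Finset Form, ↑s ⊆ Δ ∧ L (↑s) A := by
  induction d with
  | @prem C hC => exact ⟨{C}, by simpa using hC, L.prem (by simp)⟩
  | axK A B => exact ⟨∅, by simp, L.axK A B⟩
  | axS A B C => exact ⟨∅, by simp, L.axS A B C⟩
  | axDNE A => exact ⟨∅, by simp, L.axDNE A⟩
  | axAndI A B => exact ⟨∅, by simp, L.axAndI A B⟩
  | axAndL A B => exact ⟨∅, by simp, L.axAndL A B⟩
  | axAndR A B => exact ⟨∅, by simp, L.axAndR A B⟩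
  | axOrL A B => exact ⟨∅, by simp, L.axOrL A B⟩
  | axOrR A B => exact ⟨∅, by simp, L.axOrR A B⟩
  | axOrE A B C => exact ⟨∅, by simp, L.axOrE A B C⟩
  | axC A B => exact ⟨∅, by simp, L.axC A B⟩
  | axH A B => exact ⟨∅, by simp, L.axH A B⟩
  | axT A => exact ⟨∅, by simp, L.axT A⟩
  | axN => exact ⟨∅, by simp, L.axN⟩
  | mp _ _ ih1 ih2 =>
    obtain ⟨s1, hs1, d1⟩ := ih1
    obtain ⟨s2, hs2, d2⟩ := ih2
    refine ⟨s1 ∪ s2, ?_, L.mp (d1.mono ?_) (d2.mono ?_)⟩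
    · rw [Finset.coe_union]; exact Set.union_subset hs1 hs2
    · rw [Finset.coe_union]; exact Set.subset_union_left
    · rw [Finset.coe_union]; exact Set.subset_union_right

def MCS (w : Set Form) : Prop := Con w ∧ ∀ A : Form, A ∈ w ∨ A.neg ∈ w

theorem MCS.closed {w : Set Form} (hw : MCS w) {A : Form} (d : L w A) : A ∈ w := by
  rcases hw.2 A with h | h
  · exact h
  · exact absurd (L.mp (L.prem h) d) hw.1

theorem MCS.not_bot {w : Set Form} (hw : MCS w) : Form.bot ∉ w :=
  fun h => hw.1 (L.prem h)

theorem MCS.mem_neg {w : Set Form} (hw : MCS w) {A : Form} : A.neg ∈ w ↔ A ∉ w := by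
  constructor
  · intro h hA; exact hw.1 (L.mp (L.prem h) (L.prem hA))
  · intro h; rcases hw.2 A with h' | h'; exact absurd h' h; exact h'

theorem MCS.mem_imp {w : Set Form} (hw : MCS w) {A B : Form} :
    A.imp B ∈ w ↔ (A ∈ w → B ∈ w) := by
  constructor
  · intro h hA; exact hw.closed (L.mp (L.prem h) (L.prem hA))
  · intro h
    by_cases hA : A ∈ w
    · exact hw.closed (L.mp (L.axK B A) (L.prem (h hA)))
    · exact hw.closed (L.mp (L.negImp w A B) (L.prem (hw.mem_neg.mpr hA)))

theorem MCS.mem_and {w : Set Form} (hw : MCS w) {A B : Form} :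
    A.and B ∈ w ↔ (A ∈ w ∧ B ∈ w) := by
  constructor
  · intro h
    exact ⟨hw.closed (L.mp (L.axAndL A B) (L.prem h)),
           hw.closed (L.mp (L.axAndR A B) (L.prem h))⟩
  · rintro ⟨hA, hB⟩
    exact hw.closed (L.mp (L.mp (L.axAndI A B) (L.prem hA)) (L.prem hB))

theorem MCS.mem_or {w : Set Form} (hw : MCS w) {A B : Form} :
    A.or B ∈ w ↔ (A ∈ w ∨ B ∈ w) := by
  constructor
  · intro h
    by_cases hA : A ∈ w
    · exact Or.inl hA
    · refine Or.inr (hw.closed ?_)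
      have hnA : L w (A.imp B) := L.mp (L.negImp w A B) (L.prem (hw.mem_neg.mpr hA))
      exact L.mp (L.mp (L.mp (L.axOrE A B B) hnA) (L.impSelf w B)) (L.prem h)
  · rintro (hA | hB)
    · exact hw.closed (L.mp (L.axOrL A B) (L.prem hA))
    · exact hw.closed (L.mp (L.axOrR A B) (L.prem hB))

/-- Lindenbaum's lemma. -/
theorem lindenbaum {Δ : Set Form} (h : Con Δ) :
    ∃ w : Set Form, Δ ⊆ w ∧ MCS w := by
  have hub : ∀ c ⊆ {s : Set Form | Con s}, IsChain (· ⊆ ·) c → c.Nonempty →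
      ∃ ub ∈ {s : Set Form | Con s}, ∀ s ∈ c, s ⊆ ub := by
    intro c hc hchain hne
    refine ⟨⋃₀ c, ?_, fun s hs => Set.subset_sUnion_of_mem hs⟩
    intro hbot
    obtain ⟨s, hsub, ds⟩ := L.fin hbot
    have key : ∀ s : Finset Form, (↑s : Set Form) ⊆ ⋃₀ c → ∃ t ∈ c, (↑s : Set Form) ⊆ t := by
      intro s
      induction s using Finset.induction_on with
      | empty => intro _; obtain ⟨t, ht⟩ := hne; exact ⟨t, ht, by simp⟩
      | @insert a s' ha ih =>
        intro hsub'
        obtain ⟨t, htc, hts⟩ := ih (fun x hx => hsub' (by simp [hx]))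
        obtain ⟨t', ht'c, hat'⟩ := hsub' (Finset.mem_coe.mpr (Finset.mem_insert_self a s'))
        rcases hchain.total htc ht'c with htt | htt
        · refine ⟨t', ht'c, ?_⟩
          intro x hx
          rcases Finset.mem_insert.mp (by exact_mod_cast hx) with h | h
          · exact h ▸ hat'
          · exact htt (hts (by exact_mod_cast h))
        · refine ⟨t, htc, ?_⟩
          intro x hx
          rcases Finset.mem_insert.mp (by exact_mod_cast hx) with h | h
          · exact h ▸ htt hat'
          · exact hts (by exact_mod_cast h)
    obtain ⟨t, htc, hst⟩ := key s hsub
    exact hc htc (ds.mono hst)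
  obtain ⟨m, hΔm, hmS, hmax⟩ := zorn_subset_nonempty {s : Set Form | Con s} hub Δ h
  refine ⟨m, hΔm, hmS, fun A => ?_⟩
  by_cases hA : A ∈ m
  · exact Or.inl hA
  · right
    have hincon : ¬ Con (insert A m) := by
      intro hcon
      exact hA (hmax hcon (Set.subset_insert A m) (Set.mem_insert A m))
    have hnA : L m (A.neg) := L.ded (not_not.mp hincon)
    have hcon : Con (insert (A.neg) m) := by
      intro hbot
      exact hmS (L.mp (L.ded hbot) hnA)
    exact hmax hcon (Set.subset_insert _ m) (Set.mem_insert _ m)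

section Canonical

variable (Γ : Set Form)

/-- The theorems of `LP(□)` over `Γ`. -/
def T : Set Form := {B | Deriv Γ B}

/-- Canonical worlds: maximal consistent sets containing all `Γ`-theorems. -/
def World : Type := {w : Set Form // T Γ ⊆ w ∧ MCS w}

def pSet (B : Form) : Set (World Γ) := {v | B ∈ v.val}

/-- The canonical (supplemented) neighborhood model. -/
def canM : Model (World Γ) where
  S := fun w => {X | ∃ B, Form.box B ∈ w.val ∧ pSet Γ B ⊆ X}
  V := fun n => {w | Form.atom n ∈ w.val}

theorem derivImpSelf (A : Form) : Deriv Γ (A.imp A) :=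
  Deriv.mp (Deriv.mp (Deriv.axS A (A.imp A) A) (Deriv.axK A (A.imp A))) (Deriv.axK A A)

theorem derivComp {X Y Z : Form} (h1 : Deriv Γ (X.imp Y)) (h2 : Deriv Γ (Y.imp Z)) :
    Deriv Γ (X.imp Z) :=
  Deriv.mp (Deriv.mp (Deriv.axS X Y Z) (Deriv.mp (Deriv.axK (Y.imp Z) X) h2)) h1

theorem subset_imp {C B : Form} (h : pSet Γ C ⊆ pSet Γ B) : Deriv Γ (C.imp B) := by
  by_contra hd
  have hL : ¬ L (T Γ) (C.imp B) := fun d => hd d.toDeriv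
  have hcon : Con (insert (B.neg) (insert C (T Γ))) := by
    intro hbot
    have h1 : L (insert C (T Γ)) (B.neg.neg) := L.ded hbot
    have h2 : L (insert C (T Γ)) B := L.mp (L.axDNE B) h1
    exact hL (L.ded h2)
  obtain ⟨w, hsubw, hw⟩ := lindenbaum hcon
  have hTw : T Γ ⊆ w := fun X hX => hsubw (Or.inr (Or.inr hX))
  have hCw : C ∈ w := hsubw (Or.inr (Or.inl rfl))
  have hnBw : B.neg ∈ w := hsubw (Or.inl rfl)
  have hBw : B ∈ w := h (show (⟨w, hTw, hw⟩ : World Γ) ∈ pSet Γ C from hCw)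
  exact (hw.mem_neg.mp hnBw) hBw

theorem boxMono {C B : Form} (hCB : Deriv Γ (C.imp B)) :
    Deriv Γ ((C.box).imp (B.box)) := by
  have h1 : Deriv Γ ((C.or B).imp B) :=
    Deriv.mp (Deriv.mp (Deriv.axOrE C B B) hCB) (derivImpSelf Γ B)
  have hiff : Deriv Γ ((C.or B).iff B) :=
    Deriv.mp (Deriv.mp (Deriv.axAndI _ _) h1) (Deriv.axOrR C B)
  have hre : Deriv Γ (((C.or B).box).iff (B.box)) := Deriv.re hiff
  have d3 : Deriv Γ (((C.or B).box).imp (B.box)) := Deriv.mp (Deriv.axAndL _ _) hre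
  exact derivComp Γ (derivComp Γ (Deriv.axOrL (C.box) (B.box)) (Deriv.axH C B)) d3

theorem truthLemma : ∀ (B : Form) (w : World Γ), truth (canM Γ) w B ↔ B ∈ w.val := by
  intro B
  induction B with
  | atom n => intro w; exact Iff.rfl
  | bot => intro w; exact ⟨False.elim, fun h => w.2.2.not_bot h⟩
  | imp B C ih1 ih2 =>
    intro w
    simp only [truth, ih1, ih2]
    exact (w.2.2.mem_imp).symm
  | and B C ih1 ih2 =>
    intro w
    simp only [truth, ih1, ih2]
    exact (w.2.2.mem_and).symm
  | or B C ih1 ih2 =>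
    intro w
    simp only [truth, ih1, ih2]
    exact (w.2.2.mem_or).symm
  | box B ih =>
    intro w
    have hset : {v : World Γ | truth (canM Γ) v B} = pSet Γ B := Set.ext fun v => ih v
    show {v : World Γ | truth (canM Γ) v B} ∈ (canM Γ).S w ↔ Form.box B ∈ w.val
    rw [hset]
    constructor
    · rintro ⟨C, hC, hsub⟩
      have hCB : Deriv Γ (C.imp B) := subset_imp Γ hsub
      have hmono : (C.box).imp (B.box) ∈ w.val := w.2.1 (boxMono Γ hCB)
      exact w.2.2.closed (L.mp (L.prem hmono) (L.prem hC))
    · intro hB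
      exact ⟨B, hB, subset_rfl⟩

theorem canC : condC (canM Γ) := by
  rintro α X Y ⟨B, hB, hBX⟩ ⟨C, hC, hCY⟩
  refine ⟨B.and C, ?_, ?_⟩
  · exact α.2.2.closed
      (L.mp (L.axC B C) (L.mp (L.mp (L.axAndI _ _) (L.prem hB)) (L.prem hC)))
  · intro v hv
    have := v.2.2.mem_and.mp hv
    exact ⟨hBX this.1, hCY this.2⟩

theorem canH : condH (canM Γ) := by
  rintro α X Y (⟨B, hB, hBX⟩ | ⟨B, hB, hBY⟩)
  · exact ⟨B, hB, fun v hv => Or.inl (hBX hv)⟩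
  · exact ⟨B, hB, fun v hv => Or.inr (hBY hv)⟩

theorem canT : condT (canM Γ) := by
  rintro α X ⟨B, hB, hBX⟩
  exact hBX (α.2.2.closed (L.mp (L.axT B) (L.prem hB)))

theorem canN : condN (canM Γ) := by
  intro α
  exact ⟨Form.top, α.2.2.closed L.axN, Set.subset_univ _⟩

end Canonical

end Compl

/-- Completeness of `LP(□)` with respect to neighborhood models
satisfying (c), (h), (t), (n). -/
theorem stmt14 (Γ : Set Form) (A : Form) (h : GlobalCons Γ A) : Deriv Γ A := by
  classical
  by_contra hd
  have hL : ¬ Compl.L (Compl.T Γ) A := fun d => hd d.toDeriv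
  have hcon : Compl.Con (insert (A.neg) (Compl.T Γ)) := by
    intro hbot
    have h1 : Compl.L (Compl.T Γ) (A.neg.neg) := Compl.L.ded hbot
    exact hL (Compl.L.mp (Compl.L.axDNE A) h1)
  obtain ⟨w, hsubw, hw⟩ := Compl.lindenbaum hcon
  have hTw : Compl.T Γ ⊆ w := fun X hX => hsubw (Or.inr hX)
  let W : Compl.World Γ := ⟨w, hTw, hw⟩
  have hglobal : ∀ B ∈ Γ, ∀ α : Compl.World Γ, truth (Compl.canM Γ) α B :=
    fun B hB α => (Compl.truthLemma Γ B α).mpr (α.2.1 (Deriv.prem hB))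
  have hA : truth (Compl.canM Γ) W A :=
    h (Compl.World Γ) (Compl.canM Γ) (Compl.canC Γ) (Compl.canH Γ)
      (Compl.canT Γ) (Compl.canN Γ) hglobal W
  have hAw : A ∈ w := (Compl.truthLemma Γ A W).mp hA
  exact (hw.mem_neg.mp (hsubw (Or.inl rfl))) hAw
end

section
/- The logics LP(□) and L(∇) are deductively equivalent: under the translation mapping ∇ to □, a formula is a theorem of L(∇) if and only if its translation is a theorem of LP(□). -/
/-- Formulas of `L(∇)`. -/
inductive FormN : Type
  | atom : ℕ → FormN
  | bot : FormN
  | imp : FormN → FormN → FormN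
  | and : FormN → FormN → FormN
  | or : FormN → FormN → FormN
  | nabla : FormN → FormN

namespace FormN
def neg (A : FormN) : FormN := A.imp FormN.bot
def top : FormN := FormN.neg FormN.bot
end FormN

/-- Formulas of `LP(□)`. -/
inductive FormB : Type
  | atom : ℕ → FormB
  | bot : FormB
  | imp : FormB → FormB → FormB
  | and : FormB → FormB → FormB
  | or : FormB → FormB → FormB
  | box : FormB → FormB

namespace FormB
def neg (A : FormB) : FormB := A.imp FormB.bot
def top : FormB := FormB.neg FormB.bot
def iff (A B : FormB) : FormB := (A.imp B).and (B.imp A)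
end FormB

/-- Theoremhood in `L(∇)`. -/
inductive ProvN : FormN → Prop
  | axK (A B : FormN) : ProvN (A.imp (B.imp A))
  | axS (A B C : FormN) : ProvN ((A.imp (B.imp C)).imp ((A.imp B).imp (A.imp C)))
  | axDNE (A : FormN) : ProvN ((A.neg.neg).imp A)
  | axAndI (A B : FormN) : ProvN (A.imp (B.imp (A.and B)))
  | axAndL (A B : FormN) : ProvN ((A.and B).imp A)
  | axAndR (A B : FormN) : ProvN ((A.and B).imp B)
  | axOrL (A B : FormN) : ProvN (A.imp (A.or B))
  | axOrR (A B : FormN) : ProvN (B.imp (A.or B))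
  | axOrE (A B C : FormN) : ProvN ((A.imp C).imp ((B.imp C).imp ((A.or B).imp C)))
  | ax1 (A B : FormN) : ProvN (((A.nabla).and (B.nabla)).imp ((A.and B).nabla))
  | ax2 (A B : FormN) : ProvN ((A.nabla).imp ((A.or B).nabla))
  | ax3 (A : FormN) : ProvN ((A.nabla).imp A)
  | axN : ProvN (FormN.top.nabla)
  | mp {A B : FormN} : ProvN (A.imp B) → ProvN A → ProvN B
  | rNabla {A B : FormN} : ProvN (A.imp B) → ProvN ((A.nabla).imp (B.nabla))

/-- Theoremhood in `LP(□)`. -/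
inductive ProvB : FormB → Prop
  | axK (A B : FormB) : ProvB (A.imp (B.imp A))
  | axS (A B C : FormB) : ProvB ((A.imp (B.imp C)).imp ((A.imp B).imp (A.imp C)))
  | axDNE (A : FormB) : ProvB ((A.neg.neg).imp A)
  | axAndI (A B : FormB) : ProvB (A.imp (B.imp (A.and B)))
  | axAndL (A B : FormB) : ProvB ((A.and B).imp A)
  | axAndR (A B : FormB) : ProvB ((A.and B).imp B)
  | axOrL (A B : FormB) : ProvB (A.imp (A.or B))
  | axOrR (A B : FormB) : ProvB (B.imp (A.or B))
  | axOrE (A B C : FormB) : ProvB ((A.imp C).imp ((B.imp C).imp ((A.or B).imp C)))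
  | axC (A B : FormB) : ProvB (((A.box).and (B.box)).imp ((A.and B).box))
  | axH (A B : FormB) : ProvB (((A.box).or (B.box)).imp ((A.or B).box))
  | axT (A : FormB) : ProvB ((A.box).imp A)
  | axN : ProvB (FormB.top.box)
  | mp {A B : FormB} : ProvB (A.imp B) → ProvB A → ProvB B
  | re {A B : FormB} : ProvB (A.iff B) → ProvB ((A.box).iff (B.box))

/-- The translation from `L(∇)`-formulas to `LP(□)`-formulas, mapping `∇` to `□`. -/
def tr : FormN → FormB
  | .atom n => .atom n
  | .bot => .bot
  | .imp A B => (tr A).imp (tr B)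
  | .and A B => (tr A).and (tr B)
  | .or A B => (tr A).or (tr B)
  | .nabla A => (tr A).box


def tr' : FormB → FormN
  | .atom n => .atom n
  | .bot => .bot
  | .imp A B => (tr' A).imp (tr' B)
  | .and A B => (tr' A).and (tr' B)
  | .or A B => (tr' A).or (tr' B)
  | .box A => (tr' A).nabla

lemma tr'_tr (A : FormN) : tr' (tr A) = A := by
  induction A <;> simp_all [tr, tr']

lemma ProvB.idem (A : FormB) : ProvB (A.imp A) :=
  .mp (.mp (.axS A (A.imp A) A) (.axK A (A.imp A))) (.axK A A)

lemma ProvB.comp {A B C : FormB} (h1 : ProvB (A.imp B)) (h2 : ProvB (B.imp C)) :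
    ProvB (A.imp C) :=
  .mp (.mp (.axS A B C) (.mp (.axK (B.imp C) A) h2)) h1

lemma ProvN.idem (A : FormN) : ProvN (A.imp A) :=
  .mp (.mp (.axS A (A.imp A) A) (.axK A (A.imp A))) (.axK A A)

lemma ProvN.comp {A B C : FormN} (h1 : ProvN (A.imp B)) (h2 : ProvN (B.imp C)) :
    ProvN (A.imp C) :=
  .mp (.mp (.axS A B C) (.mp (.axK (B.imp C) A) h2)) h1

lemma ProvB.mono {A B : FormB} (h : ProvB (A.imp B)) : ProvB ((A.box).imp (B.box)) := by
  have hiff : ProvB ((A.or B).iff B) :=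
    .mp (.mp (.axAndI _ _) (.mp (.mp (.axOrE A B B) h) (.idem B))) (.axOrR A B)
  have h1 : ProvB (((A.or B).box).imp (B.box)) := .mp (.axAndL _ _) (ProvB.re hiff)
  exact .comp (.comp (.axOrL A.box B.box) (.axH A B)) h1

lemma ProvN.orComm (A B : FormN) : ProvN ((A.or B).imp (B.or A)) :=
  .mp (.mp (.axOrE A B (B.or A)) (.axOrR B A)) (.axOrL B A)

lemma forwardTr {A : FormN} (h : ProvN A) : ProvB (tr A) := by
  induction h with
  | axK A B => exact .axK _ _
  | axS A B C => exact .axS _ _ _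
  | axDNE A => exact .axDNE _
  | axAndI A B => exact .axAndI _ _
  | axAndL A B => exact .axAndL _ _
  | axAndR A B => exact .axAndR _ _
  | axOrL A B => exact .axOrL _ _
  | axOrR A B => exact .axOrR _ _
  | axOrE A B C => exact .axOrE _ _ _
  | ax1 A B => exact .axC _ _
  | ax2 A B => exact .comp (.axOrL _ _) (.axH _ _)
  | ax3 A => exact .axT _
  | axN => exact .axN
  | mp _ _ ih1 ih2 => exact .mp ih1 ih2
  | rNabla _ ih => exact .mono ih

lemma backTr {B : FormB} (h : ProvB B) : ProvN (tr' B) := by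
  induction h with
  | axK A B => exact .axK _ _
  | axS A B C => exact .axS _ _ _
  | axDNE A => exact .axDNE _
  | axAndI A B => exact .axAndI _ _
  | axAndL A B => exact .axAndL _ _
  | axAndR A B => exact .axAndR _ _
  | axOrL A B => exact .axOrL _ _
  | axOrR A B => exact .axOrR _ _
  | axOrE A B C => exact .axOrE _ _ _
  | axC A B => exact .ax1 _ _
  | axH A B =>
    exact .mp (.mp (.axOrE _ _ _) (.ax2 _ _))
      (.comp (.ax2 (tr' B) (tr' A)) (.rNabla (.orComm _ _)))
  | axT A => exact .ax3 _
  | axN => exact .axN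
  | mp _ _ ih1 ih2 => exact .mp ih1 ih2
  | re _ ih =>
    exact .mp (.mp (.axAndI _ _) (.rNabla (.mp (.axAndL _ _) ih)))
      (.rNabla (.mp (.axAndR _ _) ih))

/-- `LP(□)` and `L(∇)` are deductively equivalent: a formula is a theorem of
`L(∇)` iff its translation is a theorem of `LP(□)`. -/
theorem stmt19 (A : FormN) : ProvN A ↔ ProvB (tr A) := by
  constructor
  · exact forwardTr
  · intro h
    have := backTr h
    rwa [tr'_tr] at this
end
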